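/- Let (g,[·,·]) be a Lie algebra over a field of characteristic zero and U(g) its universal enveloping algebra with trivial quasitriangular structure R = 1⊗1. Then χ ∈ U(g)⊗U(g) is an infinitesimal R-matrix if and only if χ ∈ g⊗g (i.e. χ is a sum of tensors of primitive elements) and χ is g-invariant, meaning (ad_x⊗Id + Id⊗ad_x)(χ) = 0 for all x ∈ g. -/

import Mathlib

open scoped TensorProduct

noncomputable section

variable (k H : Type*) [Field k] [CharZero k] [Ring H] [Bialgebra k H]

/-- leg embedding `a ⊗ b ↦ a ⊗ b ⊗ 1` into `H ⊗ (H ⊗ H)`. -/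
def leg12 : H ⊗[k] H →ₐ[k] H ⊗[k] (H ⊗[k] H) :=
  Algebra.TensorProduct.map (AlgHom.id k H) Algebra.TensorProduct.includeLeft

/-- leg embedding `a ⊗ b ↦ 1 ⊗ a ⊗ b`. -/
def leg23 : H ⊗[k] H →ₐ[k] H ⊗[k] (H ⊗[k] H) :=
  Algebra.TensorProduct.includeRight

/-- leg embedding `a ⊗ b ↦ a ⊗ 1 ⊗ b`. -/
def leg13 : H ⊗[k] H →ₐ[k] H ⊗[k] (H ⊗[k] H) :=
  Algebra.TensorProduct.map (AlgHom.id k H) Algebra.TensorProduct.includeRight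

/-- `(Id ⊗ Δ)` as an algebra map `H ⊗ H → H ⊗ (H ⊗ H)`. -/
def idComul : H ⊗[k] H →ₐ[k] H ⊗[k] (H ⊗[k] H) :=
  Algebra.TensorProduct.map (AlgHom.id k H) (Bialgebra.comulAlgHom k H)

/-- `(Δ ⊗ Id)` as an algebra map `H ⊗ H → H ⊗ (H ⊗ H)` (after reassociation). -/
def comulId : H ⊗[k] H →ₐ[k] H ⊗[k] (H ⊗[k] H) :=
  (Algebra.TensorProduct.assoc k k k H H H).toAlgHom.comp
    (Algebra.TensorProduct.map (Bialgebra.comulAlgHom k H) (AlgHom.id k H))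

/-- the flip `a ⊗ b ↦ b ⊗ a` as an algebra map. -/
def swapT : H ⊗[k] H →ₐ[k] H ⊗[k] H := (Algebra.TensorProduct.comm k H H).toAlgHom

/-- A quasitriangular structure on the bialgebra `H`. -/
structure QT where
  R : H ⊗[k] H
  Rinv : H ⊗[k] H
  mul_inv : R * Rinv = 1
  inv_mul : Rinv * R = 1
  quasi_cocomm : ∀ h : H, swapT k H (Coalgebra.comul (R := k) h) * R = R * Coalgebra.comul (R := k) h
  hex1 : idComul k H R = leg13 k H R * leg12 k H R
  hex2 : comulId k H R = leg13 k H R * leg23 k H R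

/-- A pre-Cartier quasitriangular bialgebra structure on `H`. -/
structure PreCartier extends QT k H where
  χ : H ⊗[k] H
  chi_comm : ∀ h : H, χ * Coalgebra.comul (R := k) h = Coalgebra.comul (R := k) h * χ
  chi_hex1 : idComul k H χ = leg12 k H χ + leg12 k H Rinv * leg13 k H χ * leg12 k H R
  chi_hex2 : comulId k H χ = leg23 k H χ + leg23 k H Rinv * leg13 k H χ * leg23 k H R

/-- The submodule of primitive elements of `H`. -/
def Primitives : Submodule k H where
  carrier := {x : H | Coalgebra.comul (R := k) x = x ⊗ₜ[k] (1 : H) + (1 : H) ⊗ₜ[k] x}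
  add_mem' := by
    intro a b ha hb
    simp only [Set.mem_setOf_eq] at *
    rw [map_add, ha, hb, TensorProduct.add_tmul, TensorProduct.tmul_add]
    abel
  zero_mem' := by
    simp only [Set.mem_setOf_eq, map_zero, TensorProduct.zero_tmul, TensorProduct.tmul_zero,
      add_zero]
  smul_mem' := by
    intro c x hx
    simp only [Set.mem_setOf_eq] at *
    rw [map_smul, hx]
    simp [smul_add, TensorProduct.smul_tmul', TensorProduct.tmul_smul]

/-!
Write `j x = x ⊗ 1 + 1 ⊗ x` and `D = Δ - j`, so that the primitives are `ker D`. The two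
coassociativity-type conditions on `χ` say exactly that `(Id ⊗ D) χ = 0` and `(D ⊗ Id) χ = 0`;
over a field, the elements of `H ⊗ H` killed by both are those of `ker D ⊗ ker D = g ⊗ g`.
For `x ∈ g`, `Δ x = j x`, and the commutator of `j x` with `χ` is `(ad_x ⊗ Id + Id ⊗ ad_x) χ`;
since the `ι x` generate `H` as an algebra and `Δ` is multiplicative, commuting with every
`Δ (ι x)` is the same as commuting with all of `Δ H`.
-/

open LinearMap TensorProduct

section TensorKernels

variable {K V W U X : Type*} [Field K] [AddCommGroup V] [Module K V] [AddCommGroup W]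
  [Module K W] [AddCommGroup U] [Module K U] [AddCommGroup X] [Module K X]

theorem TensorProduct.mem_range_mapIncl_ker_iff (f : V →ₗ[K] U) (g : W →ₗ[K] X)
    (χ : V ⊗[K] W) :
    χ ∈ range (mapIncl (ker f) (ker g)) ↔ f.rTensor W χ = 0 ∧ g.lTensor V χ = 0 := by
  constructor
  · rintro ⟨ξ, rfl⟩
    simp [comp_ker_subtype]
  · rintro ⟨hf, hg⟩
    obtain ⟨ξ, rfl⟩ := (Module.Flat.rTensor_exact W (exact_subtype_ker_map f) χ).1 hf
    obtain ⟨η, hη⟩ := (Module.Flat.lTensor_exact V (exact_subtype_ker_map g) _).1 hg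
    obtain ⟨π, hπ⟩ := (ker g).subtype.exists_leftInverse_of_injective (ker g).ker_subtype
    -- `(ker g).subtype ∘ₗ π` is a projection onto `ker g`, so its `lTensor` fixes `χ`.
    refine ⟨π.lTensor _ ξ, ?_⟩
    calc mapIncl (ker f) (ker g) (π.lTensor _ ξ)
        = ((ker g).subtype ∘ₗ π).lTensor V ((ker f).subtype.rTensor W ξ) := by
          rw [mapIncl, map_lTensor, ← lTensor_comp_rTensor, comp_apply]
      _ = ((ker g).subtype ∘ₗ π).lTensor V ((ker g).subtype.lTensor V η) := by rw [hη]
      _ = (ker f).subtype.rTensor W ξ := by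
        rw [← hη, ← comp_apply, ← lTensor_comp, comp_assoc, hπ, comp_id]

end TensorKernels

theorem Algebra.TensorProduct.commute_tmul_one_add_one_tmul_iff {R A B : Type*} [CommRing R]
    [Ring A] [Ring B] [Algebra R A] [Algebra R B] (a : A) (b : B) (χ : A ⊗[R] B) :
    Commute χ (a ⊗ₜ 1 + 1 ⊗ₜ b) ↔
      (mulLeft R a - mulRight R a).rTensor B χ + (mulLeft R b - mulRight R b).lTensor A χ = 0 := by
  have commutator : (a ⊗ₜ 1 + 1 ⊗ₜ b) * χ - χ * (a ⊗ₜ 1 + 1 ⊗ₜ b) =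
      (mulLeft R a - mulRight R a).rTensor B χ + (mulLeft R b - mulRight R b).lTensor A χ := by
    induction χ using TensorProduct.induction_on with
    | zero => simp
    | tmul c d =>
      simp only [add_mul, mul_add, Algebra.TensorProduct.tmul_mul_tmul, one_mul, mul_one,
        LinearMap.sub_apply, rTensor_tmul, lTensor_tmul, mulLeft_apply, mulRight_apply, sub_tmul,
        tmul_sub]
      abel
    | add χ χ' h h' =>
      rw [map_add, map_add, add_add_add_comm, ← h, ← h']
      simp only [mul_add, add_mul]
      abel
  rw [← commutator, sub_eq_zero, eq_comm]
  rfl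

theorem AlgHom.commute_apply_of_adjoin_eq_top {R A B : Type*} [CommSemiring R] [Semiring A]
    [Semiring B] [Algebra R A] [Algebra R B] (φ : A →ₐ[R] B) {s : Set A}
    (hs : Algebra.adjoin R s = ⊤) {b : B} (hb : ∀ a ∈ s, Commute b (φ a)) (a : A) :
    Commute b (φ a) := by
  have ha : a ∈ Algebra.adjoin R s := hs ▸ Algebra.mem_top
  induction ha using Algebra.adjoin_induction with
  | mem a ha => exact hb a ha
  | algebraMap r => simpa using Algebra.commute_algebraMap_right r b
  | add a a' _ _ h h' => simpa using h.add_right h'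
  | mul a a' _ _ h h' => simpa using h.mul_right h'

section Primitives

variable (R A : Type*) [CommRing R] [Ring A] [Bialgebra R A]

def primitiveDefect : A →ₗ[R] A ⊗[R] A :=
  Coalgebra.comul - ((TensorProduct.mk R A A).flip 1 + TensorProduct.mk R A A 1)

variable {R A} in
theorem primitiveDefect_apply (x : A) :
    primitiveDefect R A x = Coalgebra.comul (R := R) x - (x ⊗ₜ 1 + 1 ⊗ₜ x) :=
  rfl

end Primitives

section LegConditions

variable {K A : Type*} [Field K] [Ring A] [Bialgebra K A]

theorem ker_primitiveDefect : ker (primitiveDefect K A) = Primitives K A := by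
  ext x
  simp [primitiveDefect_apply, sub_eq_zero, Primitives]

theorem lTensor_primitiveDefect_apply (χ : A ⊗[K] A) :
    (primitiveDefect K A).lTensor A χ = idComul K A χ - (leg12 K A χ + leg13 K A χ) := by
  induction χ using TensorProduct.induction_on with
  | zero => simp
  | tmul a b =>
    simp [primitiveDefect_apply, idComul, leg12, leg13, tmul_sub, tmul_add]
  | add χ χ' h h' =>
    simp only [map_add, h, h']
    abel

theorem assoc_rTensor_primitiveDefect_apply (χ : A ⊗[K] A) :
    Algebra.TensorProduct.assoc K K K A A A ((primitiveDefect K A).rTensor A χ) =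
      comulId K A χ - (leg23 K A χ + leg13 K A χ) := by
  induction χ using TensorProduct.induction_on with
  | zero => simp
  | tmul a b =>
    simp [primitiveDefect_apply, comulId, leg23, leg13, sub_tmul, add_tmul, add_comm]
  | add χ χ' h h' =>
    simp only [map_add, h, h']
    abel

theorem idComul_eq_leg12_add_leg13_iff (χ : A ⊗[K] A) :
    idComul K A χ = leg12 K A χ + leg13 K A χ ↔ (primitiveDefect K A).lTensor A χ = 0 := by
  rw [lTensor_primitiveDefect_apply, sub_eq_zero]

theorem comulId_eq_leg23_add_leg13_iff (χ : A ⊗[K] A) :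
    comulId K A χ = leg23 K A χ + leg13 K A χ ↔ (primitiveDefect K A).rTensor A χ = 0 := by
  rw [← map_eq_zero_iff _ (Algebra.TensorProduct.assoc K K K A A A).injective,
    assoc_rTensor_primitiveDefect_apply, sub_eq_zero]

end LegConditions

theorem universal_enveloping_infinitesimal_R_matrix
    {L : Type*} [LieRing L] [LieAlgebra k L]
    (ι : L →ₗ[k] H)
    (hprim : LinearMap.range ι = Primitives k H)
    (hgen : Algebra.adjoin k (Set.range ι) = ⊤)
    (χ : H ⊗[k] H) :
    ((∀ h : H, χ * Coalgebra.comul (R := k) h = Coalgebra.comul (R := k) h * χ) ∧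
      idComul k H χ = leg12 k H χ + leg13 k H χ ∧
      comulId k H χ = leg23 k H χ + leg13 k H χ) ↔
    (χ ∈ LinearMap.range (TensorProduct.map ι ι) ∧
      ∀ x : L,
        LinearMap.rTensor H (LinearMap.mulLeft k (ι x) - LinearMap.mulRight k (ι x)) χ +
          LinearMap.lTensor H (LinearMap.mulLeft k (ι x) - LinearMap.mulRight k (ι x)) χ = 0) := by
  have hker : range ι = ker (primitiveDefect k H) := hprim.trans ker_primitiveDefect.symm
  have hcomm (x : L) :
      Commute χ (Coalgebra.comul (R := k) (ι x)) ↔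
        (mulLeft k (ι x) - mulRight k (ι x)).rTensor H χ +
          (mulLeft k (ι x) - mulRight k (ι x)).lTensor H χ = 0 := by
    rw [show Coalgebra.comul (R := k) (ι x) = ι x ⊗ₜ 1 + 1 ⊗ₜ ι x from hprim.le ⟨x, rfl⟩]
    exact Algebra.TensorProduct.commute_tmul_one_add_one_tmul_iff (ι x) (ι x) χ
  rw [idComul_eq_leg12_add_leg13_iff, comulId_eq_leg23_add_leg13_iff, range_map, hker,
    ← range_mapIncl, mem_range_mapIncl_ker_iff]
  constructor
  · rintro ⟨hc, hl, hr⟩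
    exact ⟨⟨hr, hl⟩, fun x => (hcomm x).1 (hc (ι x))⟩
  · rintro ⟨⟨hr, hl⟩, hinv⟩
    refine ⟨(Bialgebra.comulAlgHom k H).commute_apply_of_adjoin_eq_top hgen ?_, hl, hr⟩
    rintro _ ⟨x, rfl⟩
    exact (hcomm x).2 (hinv x)

end
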